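/- arXiv:0704.0924 — 2 statements merged into one kernel-verified Lean document; each statement's English description precedes it below -/
import Mathlib

section
/- Let p be a prime with p ≥ 5. Then the sum, over all t in ZMod p with (6t − 1)·(6t + 1) ≠ 0, of the square of (the sum over all x in ZMod p of χ(x³ − 3x + 12t)), equals p² − 2p − 2 − p·χ(−3). -/
/-!
Expanding the square and summing over `t` first, `∑ₜ χ((t + a)(t + b))` is `p - 1` or `-1`
according as `a = b` or not, so the second moment over all `t` is `p N - p²`, where `N` counts
the pairs with `x³ - 3x = y³ - 3y`. These pairs are the diagonal together with the conic
`x² + xy + y² = 3`, which has `p - χ(-3)` points and meets the diagonal at `x = y = ±1`; hence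
`N = 2p - 2 - χ(-3)`. At the two bad parameters `t = ±1/6` the cubic acquires a double root,
`x³ - 3x ± 2 = (x ∓ 1)²(x ± 2)`, its character sum is `-χ(±3)`, and each contributes exactly
`1`.
-/

open Finset

theorem card_filter_fst_eq_snd_and {α : Type*} [Fintype α] [DecidableEq α] (R : α → Prop)
    [DecidablePred R] : #{q : α × α | q.1 = q.2 ∧ R q.1} = #{x | R x} := by
  refine card_nbij' Prod.fst (fun x => (x, x)) ?_ ?_ ?_ ?_ <;>
    simp +contextual [Set.MapsTo, Set.LeftInvOn, Set.RightInvOn, Prod.ext_iff]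

theorem cube_sub_three_mul_eq_iff {R : Type*} [CommRing R] [IsDomain R] (x y : R) :
    x ^ 3 - 3 * x = y ^ 3 - 3 * y ↔ x = y ∨ x ^ 2 + x * y + y ^ 2 = 3 := by
  rw [← sub_eq_zero, show x ^ 3 - 3 * x - (y ^ 3 - 3 * y) = (x - y) * (x ^ 2 + x * y + y ^ 2 - 3)
    by ring, mul_eq_zero, sub_eq_zero, sub_eq_zero]

section FiniteField

variable {F : Type*} [Field F] [Fintype F] [DecidableEq F]

theorem quadraticChar_sum_mul_add_of_ne_zero (hF : ringChar F ≠ 2) {d : F} (hd : d ≠ 0) :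
    ∑ v : F, quadraticChar F (v * (v + d)) = -1 := by
  -- `v ↦ d v⁻¹ + 1` permutes `F` since `0⁻¹ = 0`; at `v = 0` it gives `χ 1 = 1` instead of `0`
  have hv : ∀ v : F, quadraticChar F (v * (v + d)) + (if v = 0 then 1 else 0)
      = quadraticChar F (d * v⁻¹ + 1) := by
    intro v
    rcases eq_or_ne v 0 with rfl | hv
    · simp
    · rw [if_neg hv, add_zero, show v * (v + d) = v ^ 2 * (d * v⁻¹ + 1) by field_simp; ring,
        map_mul, quadraticChar_sq_one' hv, one_mul]
  have hperm : ∑ v : F, quadraticChar F (d * v⁻¹ + 1) = 0 := by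
    rw [← quadraticChar_sum_zero hF]
    exact ((Equiv.inv F).trans ((Equiv.mulLeft₀ d hd).trans (Equiv.addRight 1))).sum_comp
      (quadraticChar F)
  have hsum := sum_congr rfl fun v (_ : v ∈ univ) => hv v
  rw [sum_add_distrib, hperm, sum_ite_eq' univ (0 : F)] at hsum
  simpa [eq_neg_iff_add_eq_zero] using hsum

theorem quadraticChar_sum_add_mul_add (hF : ringChar F ≠ 2) (a b : F) :
    ∑ u : F, quadraticChar F ((u + a) * (u + b)) =
      if a = b then (Fintype.card F : ℤ) - 1 else -1 := by
  rw [Fintype.sum_equiv (Equiv.addRight a) _ (fun v => quadraticChar F (v * (v + (b - a))))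
    fun u => by simp only [Equiv.coe_addRight, add_add_sub_cancel]]
  split_ifs with hab
  · subst hab
    have hsq : ∀ v : F, quadraticChar F (v * (v + (a - a))) = 1 - if v = 0 then 1 else 0 := by
      intro v
      rcases eq_or_ne v 0 with rfl | hv
      · simp
      · rw [sub_self, add_zero, ← sq, quadraticChar_sq_one' hv, if_neg hv, sub_zero]
    rw [sum_congr rfl fun v _ => hsq v, sum_sub_distrib]
    simp
  · exact quadraticChar_sum_mul_add_of_ne_zero hF (sub_ne_zero.mpr (Ne.symm hab))

theorem quadraticChar_sum_sq_mul_add (hF : ringChar F ≠ 2) (a b : F) :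
    ∑ x : F, quadraticChar F ((x + a) ^ 2 * (x + b)) = -quadraticChar F (b - a) := by
  have hx : ∀ x : F, quadraticChar F ((x + a) ^ 2 * (x + b)) =
      quadraticChar F (x + b) - if x = -a then quadraticChar F (b - a) else 0 := by
    intro x
    rcases eq_or_ne x (-a) with rfl | hx
    · simp [sub_eq_neg_add]
    · rw [map_mul, quadraticChar_sq_one' (by rwa [Ne, add_eq_zero_iff_eq_neg]), if_neg hx,
        one_mul, sub_zero]
  have hshift : ∑ x : F, quadraticChar F (x + b) = 0 := by
    rw [Fintype.sum_equiv (Equiv.addRight b) (fun x => quadraticChar F (x + b)) _ fun _ => rfl,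
      quadraticChar_sum_zero hF]
  rw [sum_congr rfl fun x _ => hx x, sum_sub_distrib, hshift, sum_ite_eq' univ (-a),
    if_pos (mem_univ _), zero_sub]

theorem card_filter_sq_eq (hF : ringChar F ≠ 2) (a : F) :
    (#{x : F | x ^ 2 = a} : ℤ) = quadraticChar F a + 1 := by
  rw [← quadraticChar_card_sqrts hF a, Set.toFinset_ofPred]

theorem card_filter_sq_eq_one (hF : ringChar F ≠ 2) : #{x : F | x ^ 2 = 1} = 2 := by
  have := card_filter_sq_eq hF 1
  rw [map_one] at this
  exact_mod_cast this

theorem card_sq_add_mul_add_sq_eq_three (hF : ringChar F ≠ 2) :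
    (#{q : F × F | q.1 ^ 2 + q.1 * q.2 + q.2 ^ 2 = 3} : ℤ) =
      Fintype.card F - quadraticChar F (-3) := by
  have h2 : (2 : F) ≠ 0 := Ring.two_ne_zero hF
  -- completing the square: `4 (x² + xy + y²) = (2y + x)² + 3x²`
  have hfibre : ∀ x : F,
      #{y : F | x ^ 2 + x * y + y ^ 2 = 3} = #{z : F | z ^ 2 = 12 - 3 * x ^ 2} := by
    intro x
    refine card_nbij' (fun y => 2 * y + x) (fun z => (z - x) / 2) ?_ ?_ ?_ ?_ <;> intro y hy <;>
      simp only [coe_filter, mem_univ, true_and, Set.mem_ofPred_eq] at hy ⊢ <;> field_simp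
    · linear_combination 4 * hy
    · linear_combination hy
    · ring
    · ring
  have hchar : ∀ x : F, quadraticChar F (12 - 3 * x ^ 2) =
      quadraticChar F (-3) * quadraticChar F ((x + -2) * (x + 2)) := by
    intro x
    rw [← map_mul]
    ring_nf
  have hne : (-2 : F) ≠ 2 := by
    intro h
    exact h2 (mul_self_eq_zero.mp (by linear_combination -h))
  rw [card_filter, Fintype.sum_prod_type' fun x y => if x ^ 2 + x * y + y ^ 2 = 3 then 1 else 0]
  simp only [← card_filter, Nat.cast_sum, hfibre, card_filter_sq_eq hF, sum_add_distrib, hchar,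
    ← mul_sum, quadraticChar_sum_add_mul_add hF, if_neg hne]
  rw [sum_const, card_univ, nsmul_one]
  ring

theorem card_cube_sub_three_mul_eq (hF : ringChar F ≠ 2) (h3 : (3 : F) ≠ 0) :
    (#{q : F × F | q.1 ^ 3 - 3 * q.1 = q.2 ^ 3 - 3 * q.2} : ℤ) =
      2 * Fintype.card F - 2 - quadraticChar F (-3) := by
  have hdiag : #{q : F × F | q.1 = q.2} = Fintype.card F := by
    simpa using card_filter_fst_eq_snd_and fun _ : F => True
  have hinter : #{q : F × F | q.1 = q.2 ∧ q.1 ^ 2 + q.1 * q.2 + q.2 ^ 2 = 3} = 2 := by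
    calc _ = #{q : F × F | q.1 = q.2 ∧ q.1 ^ 2 = 1} := by
          refine congrArg card (filter_congr fun q _ => and_congr_right fun h => ?_)
          rw [← h]
          constructor <;> intro hq
          · exact mul_left_cancel₀ h3 (by linear_combination hq)
          · linear_combination 3 * hq
      _ = #{x : F | x ^ 2 = 1} := card_filter_fst_eq_snd_and fun x => x ^ 2 = 1
      _ = 2 := card_filter_sq_eq_one hF
  have hunion := card_union_add_card_inter {q : F × F | q.1 = q.2}
    {q : F × F | q.1 ^ 2 + q.1 * q.2 + q.2 ^ 2 = 3}
  rw [← filter_or, ← filter_and, hinter, hdiag] at hunion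
  simp_rw [cube_sub_three_mul_eq_iff]
  have := card_sq_add_mul_add_sq_eq_three hF
  omega

theorem sum_sq_sum_quadraticChar_add_mul (hF : ringChar F ≠ 2) (f : F → F) {c : F}
    (hc : c ≠ 0) :
    ∑ t : F, (∑ x : F, quadraticChar F (f x + c * t)) ^ 2 =
      Fintype.card F * #{q : F × F | f q.1 = f q.2} - (Fintype.card F : ℤ) ^ 2 := by
  calc ∑ t : F, (∑ x : F, quadraticChar F (f x + c * t)) ^ 2
      = ∑ t : F, (∑ x : F, quadraticChar F (f x + t)) ^ 2 :=
        Fintype.sum_equiv (Equiv.mulLeft₀ c hc) _ _ fun _ => rfl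
    _ = ∑ x : F, ∑ y : F, ∑ t : F, quadraticChar F ((t + f x) * (t + f y)) := by
        simp_rw [sq, sum_mul_sum, ← map_mul, add_comm (f _)]
        rw [sum_comm]
        exact sum_congr rfl fun x _ => sum_comm
    _ = ∑ x : F, ∑ y : F, ((Fintype.card F : ℤ) * (if f x = f y then 1 else 0) - 1) := by
        simp_rw [quadraticChar_sum_add_mul_add hF]
        exact sum_congr rfl fun x _ => sum_congr rfl fun y _ => by split_ifs <;> ring
    _ = Fintype.card F * #{q : F × F | f q.1 = f q.2} - (Fintype.card F : ℤ) ^ 2 := by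
        rw [card_filter, Fintype.sum_prod_type' fun x y => if f x = f y then 1 else 0]
        simp only [Nat.cast_sum, Nat.cast_ite, Nat.cast_one, Nat.cast_zero, mul_sum,
          sum_sub_distrib, sum_const, card_univ, nsmul_eq_mul]
        ring

theorem card_mul_sub_one_mul_mul_add_one_eq_zero (hF : ringChar F ≠ 2) {c : F} (hc : c ≠ 0) :
    #{t : F | (c * t - 1) * (c * t + 1) = 0} = 2 := by
  rw [← card_filter_sq_eq_one hF]
  refine card_nbij' (c * ·) (c⁻¹ * ·) ?_ ?_ ?_ ?_ <;> intro t ht <;>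
    simp only [coe_filter, mem_univ, true_and, Set.mem_ofPred_eq] at ht ⊢
  · linear_combination ht
  · rw [mul_inv_cancel_left₀ hc]
    linear_combination ht
  · exact inv_mul_cancel_left₀ hc t
  · exact mul_inv_cancel_left₀ hc t

theorem sq_sum_quadraticChar_cube_sub_three_mul_add_two_mul (hF : ringChar F ≠ 2)
    (h3 : (3 : F) ≠ 0) {s : F} (hs : s ^ 2 = 1) :
    (∑ x : F, quadraticChar F (x ^ 3 - 3 * x + 2 * s)) ^ 2 = 1 := by
  have hs0 : s ≠ 0 := by rintro rfl; simp at hs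
  have hfactor : ∀ x : F, x ^ 3 - 3 * x + 2 * s = (x + -s) ^ 2 * (x + 2 * s) := fun x => by
    linear_combination (3 * x - 2 * s) * hs
  simp_rw [hfactor, quadraticChar_sum_sq_mul_add hF, neg_sq, show 2 * s - -s = 3 * s by ring]
  exact quadraticChar_sq_one (mul_ne_zero h3 hs0)

end FiniteField

theorem second_moment_nonCM_family (p : ℕ) [Fact p.Prime] (hp : 5 ≤ p) :
    ∑ t ∈ Finset.univ.filter (fun t : ZMod p => (6 * t - 1) * (6 * t + 1) ≠ 0),
      (∑ x : ZMod p, quadraticChar (ZMod p) (x ^ 3 - 3 * x + 12 * t)) ^ 2 =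
      (p : ℤ) ^ 2 - 2 * (p : ℤ) - 2 - (p : ℤ) * quadraticChar (ZMod p) (-3) := by
  have hF : ringChar (ZMod p) ≠ 2 := by rw [ZMod.ringChar_zmod_n]; omega
  have h2 : (2 : ZMod p) ≠ 0 := Ring.two_ne_zero hF
  have h3 : (3 : ZMod p) ≠ 0 := by
    rw [Ne, ← Nat.cast_ofNat, ZMod.natCast_eq_zero_iff]
    exact fun h => by have := Nat.le_of_dvd (by norm_num) h; omega
  have h6 : (6 : ZMod p) ≠ 0 := by
    simpa [show (6 : ZMod p) = 2 * 3 by norm_num] using ⟨h2, h3⟩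
  have h12 : (12 : ZMod p) ≠ 0 := by
    simpa [show (12 : ZMod p) = 2 * 6 by norm_num] using ⟨h2, h6⟩
  set S : ZMod p → ℤ := fun t =>
    (∑ x : ZMod p, quadraticChar (ZMod p) (x ^ 3 - 3 * x + 12 * t)) ^ 2
  have hall : ∑ t, S t = (p : ℤ) ^ 2 - 2 * p - p * quadraticChar (ZMod p) (-3) := by
    rw [sum_sq_sum_quadraticChar_add_mul hF (fun x => x ^ 3 - 3 * x) h12,
      card_cube_sub_three_mul_eq hF h3, ZMod.card]
    ring
  have hsingular : ∀ t : ZMod p, ¬(6 * t - 1) * (6 * t + 1) ≠ 0 → S t = 1 := fun t ht => by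
    have hs : (6 * t) ^ 2 = 1 := by linear_combination not_not.mp ht
    simpa [S, show 12 * t = 2 * (6 * t) by ring] using
      sq_sum_quadraticChar_cube_sub_three_mul_add_two_mul hF h3 hs
  have hcard : #{t : ZMod p | ¬(6 * t - 1) * (6 * t + 1) ≠ 0} = 2 := by
    simpa only [not_not] using card_mul_sub_one_mul_mul_add_one_eq_zero hF h6
  rw [← sum_filter_add_sum_filter_not univ (fun t : ZMod p => (6 * t - 1) * (6 * t + 1) ≠ 0),
    sum_congr rfl fun t ht => hsingular t (mem_filter.mp ht).2, sum_const, nsmul_one,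
    hcard, Nat.cast_ofNat] at hall
  linarith
end

section
/- Let ℓ ≥ 1 be a natural number and let x be a real number with |x| < 1. Then the series ∑_{k=0}^∞ (2k + 1)·(∏_{j=0}^{ℓ−1} (k − j)·(k + 1 + j))·x^k converges and equals (2ℓ + 1)! · x^ℓ·(1 + x) / (1 − x)^{2ℓ+2}. -/
/-!
The product `∏_{j<ℓ} (k - j)(k + 1 + j)` is the falling factorial
`(k + ℓ)(k + ℓ - 1)⋯(k - ℓ + 1)` of length `2ℓ`. Writing `2k + 1 = (k + ℓ + 1) + (k - ℓ)` splits
each term into two falling factorials of length `2ℓ + 1`, i.e.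
`(2ℓ + 1)! (C(k + ℓ + 1, 2ℓ + 1) + C(k + ℓ, 2ℓ + 1))`. The two resulting series are shifted
negative binomial series, with sums `x^ℓ / (1 - x)^(2ℓ+2)` and `x^(ℓ+1) / (1 - x)^(2ℓ+2)`.
-/

open Polynomial

section Pochhammer

variable {R : Type*} [CommRing R]

theorem prod_range_mul_eq_descPochhammer_eval (l : ℕ) (y : R) :
    ∏ j ∈ Finset.range l, ((y - j) * (y + 1 + j)) = (descPochhammer R (2 * l)).eval (y + l) := by
  induction l with
  | zero => simp
  | succ l ih =>
    rw [Finset.prod_range_succ, ih, show 2 * (l + 1) = 2 * l + 1 + 1 by ring,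
      descPochhammer_succ_eval, descPochhammer_succ_left, eval_mul, eval_comp]
    simp only [eval_X, eval_sub, eval_one]
    push_cast
    ring_nf

theorem descPochhammer_succ_eval_add_one_add_eval (n : ℕ) (z : R) :
    (descPochhammer R (n + 1)).eval (z + 1) + (descPochhammer R (n + 1)).eval z =
      (2 * z + 1 - n) * (descPochhammer R n).eval z := by
  rw [descPochhammer_succ_eval n z, descPochhammer_succ_left, eval_mul, eval_comp]
  simp only [eval_X, eval_sub, eval_one, add_sub_cancel_right]
  ring

theorem two_mul_add_one_mul_prod_range_eq (l : ℕ) (y : R) :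
    (2 * y + 1) * ∏ j ∈ Finset.range l, ((y - j) * (y + 1 + j)) =
      (descPochhammer R (2 * l + 1)).eval (y + l + 1) +
        (descPochhammer R (2 * l + 1)).eval (y + l) := by
  rw [prod_range_mul_eq_descPochhammer_eval, descPochhammer_succ_eval_add_one_add_eval]
  push_cast
  ring

theorem factorial_mul_choose_eq_descPochhammer_eval (N m : ℕ) :
    (m.factorial : R) * N.choose m = (descPochhammer R m).eval (N : R) := by
  rw [← Nat.cast_mul, ← Nat.descFactorial_eq_factorial_mul_choose,
    descPochhammer_eval_eq_descFactorial]

end Pochhammer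

theorem hasSum_choose_add_mul_geometric {𝕜 : Type*} [NormedField 𝕜] (a b : ℕ) {x : 𝕜}
    (hx : ‖x‖ < 1) :
    HasSum (fun k : ℕ => ((k + a).choose (a + b) : 𝕜) * x ^ k) (x ^ b / (1 - x) ^ (a + b + 1)) := by
  rw [← hasSum_nat_add_iff' b]
  have hlow : ∑ i ∈ Finset.range b, ((i + a).choose (a + b) : 𝕜) * x ^ i = 0 :=
    Finset.sum_eq_zero fun i hi => by
      rw [Nat.choose_eq_zero_of_lt (by simp at hi; omega), Nat.cast_zero, zero_mul]
  rw [hlow, sub_zero, ← mul_one_div]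
  refine ((hasSum_choose_mul_geometric_of_norm_lt_one (a + b) hx).mul_left (x ^ b)).congr_fun
    fun k => ?_
  rw [show k + b + a = k + (a + b) by ring, pow_add]
  ring

theorem polylog_combination_odd_general (l : ℕ) (x : ℝ) (hx : |x| < 1) :
    HasSum (fun k : ℕ =>
        (2 * (k : ℝ) + 1) * (∏ j ∈ Finset.range l, (((k : ℝ) - (j : ℝ)) * ((k : ℝ) + 1 + (j : ℝ)))) * x ^ k)
      (((2 * l + 1).factorial : ℝ) * (x ^ l * (1 + x) / (1 - x) ^ (2 * l + 2))) := by
  have hx' : ‖x‖ < 1 := by rwa [Real.norm_eq_abs]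
  set c : ℝ := ((2 * l + 1).factorial : ℝ)
  have hterm : ∀ k : ℕ,
      (2 * (k : ℝ) + 1) * (∏ j ∈ Finset.range l, (((k : ℝ) - j) * ((k : ℝ) + 1 + j))) =
        c * ((k + (l + 1)).choose ((l + 1) + l) : ℝ) + c * ((k + l).choose (l + (l + 1)) : ℝ) := by
    intro k
    rw [two_mul_add_one_mul_prod_range_eq, show (l + 1) + l = 2 * l + 1 by ring,
      show l + (l + 1) = 2 * l + 1 by ring, factorial_mul_choose_eq_descPochhammer_eval,
      factorial_mul_choose_eq_descPochhammer_eval]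
    push_cast
    ring_nf
  have hsum : c * (x ^ l * (1 + x) / (1 - x) ^ (2 * l + 2)) =
      c * (x ^ l / (1 - x) ^ (l + 1 + l + 1)) +
        c * (x ^ (l + 1) / (1 - x) ^ (l + (l + 1) + 1)) := by
    rw [show l + 1 + l + 1 = 2 * l + 2 by ring, show l + (l + 1) + 1 = 2 * l + 2 by ring]
    ring
  rw [hsum]
  refine (((hasSum_choose_add_mul_geometric (l + 1) l hx').mul_left c).add
    ((hasSum_choose_add_mul_geometric l (l + 1) hx').mul_left c)).congr_fun fun k => ?_
  rw [hterm]
  ring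

theorem polylog_combination_odd (l : ℕ) (hl : 1 ≤ l) (x : ℝ) (hx : |x| < 1) :
    HasSum (fun k : ℕ =>
        (2 * (k : ℝ) + 1) * (∏ j ∈ Finset.range l, (((k : ℝ) - (j : ℝ)) * ((k : ℝ) + 1 + (j : ℝ)))) * x ^ k)
      (((2 * l + 1).factorial : ℝ) * (x ^ l * (1 + x) / (1 - x) ^ (2 * l + 2))) :=
  polylog_combination_odd_general l x hx
end
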